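/- arXiv:1210.1988 — 4 statements merged into one kernel-verified Lean document; each statement's English description precedes it below -/
import Mathlib

section
/- Let π1, π2, π3 be three pairwise distinct cyclic permutations of {0,1,2,3,4}. Then there exists at most one cyclic permutation π0 of {0,1,2,3,4} such that for each j ∈ {1,2,3} there is an antiroute of size 1 from π0 to πj. -/
/-- The cyclic permutation `(a b c d e)` of `Fin 5`, sending `a ↦ b ↦ c ↦ d ↦ e ↦ a`. -/
def cyc5 (a b c d e : Fin 5) : Equiv.Perm (Fin 5) :=
  Equiv.swap a e * Equiv.swap a d * Equiv.swap a c * Equiv.swap a b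

/-- A permutation is *cyclic* if it consists of a single cycle through all elements. -/
def IsCyclicPerm {α : Type*} [Fintype α] [DecidableEq α] (σ : Equiv.Perm α) : Prop :=
  σ.IsCycle ∧ σ.support = Finset.univ

/-- `RouteList γ L κ` holds when successively applying the transpositions in the list `L`
(each, at the moment it is applied, being a swap of two symbols adjacent in the current
cyclic permutation, and acting by conjugation, i.e. by interchanging the two symbols)
transforms `γ` into `κ`. -/
def RouteList {α : Type*} [DecidableEq α] :
    Equiv.Perm α → List (Equiv.Perm α) → Equiv.Perm α → Prop
  | γ, [], κ => γ = κ
  | γ, τ :: L, κ => ∃ x y, x ≠ y ∧ τ = Equiv.swap x y ∧ (γ x = y ∨ γ y = x) ∧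
      RouteList (τ * γ * τ) L κ

/-- `P` is a *route* from `γ` to `κ`: a set of pairwise distinct transpositions that can be
ordered into a sequence whose successive application transforms `γ` into `κ`. -/
def IsRoute {α : Type*} [Fintype α] [DecidableEq α] (γ κ : Equiv.Perm α)
    (P : Finset (Equiv.Perm α)) : Prop :=
  ∃ L : List (Equiv.Perm α), L.Nodup ∧ L.toFinset = P ∧ RouteList γ L κ

/-- `P` is an *antiroute* from `γ` to `κ`: a route from `γ` to the reverse `κ⁻¹` of `κ`. -/
def IsAntiroute {α : Type*} [Fintype α] [DecidableEq α] (γ κ : Equiv.Perm α)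
    (P : Finset (Equiv.Perm α)) : Prop :=
  IsRoute γ κ⁻¹ P

/-!
An antiroute of size 1 from `π0` to `π` says that `π⁻¹` arises from `π0` by interchanging two
adjacent symbols, i.e. by conjugating with their transposition. This neighbour relation is
equivariant under conjugation and the 5-cycles form a single conjugacy class, so it suffices to
check, for the one 5-cycle `finRotate 5`, that no other permutation shares three of its
neighbours; this is a finite computation.
-/

open Equiv Finset

def swapNeighbors {α : Type*} [Fintype α] [DecidableEq α] (γ : Perm α) : Finset (Perm α) :=
  univ.image fun x => swap x (γ x) * γ * swap x (γ x)

section SwapNeighbors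

variable {α : Type*} [Fintype α] [DecidableEq α]

theorem inv_mem_swapNeighbors_of_antiroute_card_eq_one {γ κ : Perm α}
    (h : ∃ P, IsAntiroute γ κ P ∧ #P = 1) : κ⁻¹ ∈ swapNeighbors γ := by
  obtain ⟨P, ⟨L, hnodup, rfl, hroute⟩, hcard⟩ := h
  obtain ⟨τ, rfl⟩ : ∃ τ, L = [τ] := List.length_eq_one_iff.mp <| by
    rw [← List.toFinset_card_of_nodup hnodup, hcard]
  obtain ⟨x, y, -, rfl, hadj, hconj : swap x y * γ * swap x y = κ⁻¹⟩ := hroute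
  rcases hadj with rfl | rfl
  · exact mem_image.mpr ⟨x, mem_univ x, hconj⟩
  · exact mem_image.mpr ⟨y, mem_univ y, by rwa [swap_comm]⟩

theorem conj_mem_swapNeighbors_conj (σ : Perm α) {γ κ : Perm α} (h : κ ∈ swapNeighbors γ) :
    σ * κ * σ⁻¹ ∈ swapNeighbors (σ * γ * σ⁻¹) := by
  obtain ⟨x, -, rfl⟩ := mem_image.mp h
  refine mem_image.mpr ⟨σ x, mem_univ _, ?_⟩
  have hx : (σ * γ * σ⁻¹) (σ x) = σ (γ x) := by simp
  rw [hx, swap_apply_apply]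
  group

theorem card_swapNeighbors_inter_le_conj (σ γ γ' : Perm α) :
    #(swapNeighbors γ ∩ swapNeighbors γ') ≤
      #(swapNeighbors (σ * γ * σ⁻¹) ∩ swapNeighbors (σ * γ' * σ⁻¹)) := by
  refine card_le_card_of_injOn (fun κ => σ * κ * σ⁻¹) (fun κ hκ => ?_)
    (fun κ _ κ' _ h => by simpa using h)
  rw [coe_inter, Set.mem_inter_iff, mem_coe, mem_coe] at hκ ⊢
  exact ⟨conj_mem_swapNeighbors_conj σ hκ.1, conj_mem_swapNeighbors_conj σ hκ.2⟩

end SwapNeighbors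

set_option maxRecDepth 2000 in
theorem eq_finRotate_of_three_le_card_swapNeighbors_inter :
    ∀ γ : Perm (Fin 5), 3 ≤ #(swapNeighbors (finRotate 5) ∩ swapNeighbors γ) →
      γ = finRotate 5 := by
  decide

theorem eq_of_three_le_card_swapNeighbors_inter {γ γ' : Perm (Fin 5)} (hγ : IsCyclicPerm γ)
    (h : 3 ≤ #(swapNeighbors γ ∩ swapNeighbors γ')) : γ = γ' := by
  obtain ⟨σ, rfl⟩ : ∃ σ, σ * finRotate 5 * σ⁻¹ = γ := isConj_iff.mp <|
    isCycle_finRotate.isConj hγ.1 (by rw [support_finRotate, hγ.2])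
  have hconj := h.trans (card_swapNeighbors_inter_le_conj σ⁻¹ _ γ')
  have hrot : σ⁻¹ * (σ * finRotate 5 * σ⁻¹) * σ⁻¹⁻¹ = finRotate 5 := by group
  rw [hrot] at hconj
  rw [← eq_finRotate_of_three_le_card_swapNeighbors_inter _ hconj]
  group

theorem at_most_one_common_antiroute_neighbor_general
    (π1 π2 π3 : Equiv.Perm (Fin 5))
    (h12 : π1 ≠ π2) (h13 : π1 ≠ π3) (h23 : π2 ≠ π3) :
    ∀ π0 π0' : Equiv.Perm (Fin 5), IsCyclicPerm π0 → IsCyclicPerm π0' →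
      (∃ P, IsAntiroute π0 π1 P ∧ P.card = 1) →
      (∃ P, IsAntiroute π0 π2 P ∧ P.card = 1) →
      (∃ P, IsAntiroute π0 π3 P ∧ P.card = 1) →
      (∃ P, IsAntiroute π0' π1 P ∧ P.card = 1) →
      (∃ P, IsAntiroute π0' π2 P ∧ P.card = 1) →
      (∃ P, IsAntiroute π0' π3 P ∧ P.card = 1) →
      π0 = π0' := by
  intro π0 π0' hπ0 _ h01 h02 h03 h01' h02' h03'
  refine eq_of_three_le_card_swapNeighbors_inter hπ0 ?_
  have hcard : #({π1⁻¹, π2⁻¹, π3⁻¹} : Finset (Perm (Fin 5))) = 3 := by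
    simp [h12, h13, h23]
  refine hcard.symm.le.trans (card_le_card fun κ hκ => ?_)
  simp only [mem_insert, mem_singleton] at hκ
  rcases hκ with rfl | rfl | rfl <;> refine mem_inter.mpr ⟨?_, ?_⟩ <;>
    exact inv_mem_swapNeighbors_of_antiroute_card_eq_one ‹_›

/-- If `π1, π2, π3` are three pairwise distinct cyclic permutations of `{0,1,2,3,4}`, then
there is at most one cyclic permutation `π0` admitting an antiroute of size 1 to each of
`π1`, `π2`, `π3`. -/
theorem at_most_one_common_antiroute_neighbor
    (π1 π2 π3 : Equiv.Perm (Fin 5))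
    (hc1 : IsCyclicPerm π1) (hc2 : IsCyclicPerm π2) (hc3 : IsCyclicPerm π3)
    (h12 : π1 ≠ π2) (h13 : π1 ≠ π3) (h23 : π2 ≠ π3) :
    ∀ π0 π0' : Equiv.Perm (Fin 5), IsCyclicPerm π0 → IsCyclicPerm π0' →
      (∃ P, IsAntiroute π0 π1 P ∧ P.card = 1) →
      (∃ P, IsAntiroute π0 π2 P ∧ P.card = 1) →
      (∃ P, IsAntiroute π0 π3 P ∧ P.card = 1) →
      (∃ P, IsAntiroute π0' π1 P ∧ P.card = 1) →
      (∃ P, IsAntiroute π0' π2 P ∧ P.card = 1) →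
      (∃ P, IsAntiroute π0' π3 P ∧ P.card = 1) →
      π0 = π0' :=
  at_most_one_common_antiroute_neighbor_general π1 π2 π3 h12 h13 h23
end

section
/- Let π0 = (01234), π1 = (01432), π2 = (04312), π3 = (03421), cyclic permutations of {0,1,2,3,4}. Then there do NOT exist cyclic permutations γ0, γ1, γ2, γ3, γ4 of the 4-element set {a0,a1,a2,a3}, together with antiroutes P_{ij} from πi to πj for all 0 ≤ i < j ≤ 3 with |P_{01}| = |P_{02}| = |P_{03}| = 1 and |P_{12}| = |P_{13}| = |P_{23}| = 2, such that for every pair k ≠ ℓ in {0,1,2,3,4} the set Q_{kℓ} := { (a_i a_j) : 0 ≤ i < j ≤ 3 and the transposition (k ℓ) belongs to P_{ij} } is an antiroute from γk to γℓ. -/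
/-- Given sets `P i j` of transpositions of `{0,1,2,3,4}` for pairs of indices `i < j` in
`Fin 4`, the set `Q_{kℓ}` consists of the transpositions `(a_i a_j)` (for `i < j`)
such that the transposition `(k ℓ)` belongs to `P i j`. -/
def Qset (P : Fin 4 → Fin 4 → Finset (Equiv.Perm (Fin 5))) (k l : Fin 5) :
    Finset (Equiv.Perm (Fin 4)) :=
  ((Finset.univ : Finset (Fin 4 × Fin 4)).filter
      (fun p => p.1 < p.2 ∧ Equiv.swap k l ∈ P p.1 p.2)).image
    (fun p => Equiv.swap p.1 p.2)

/-- The rotations `π0 = (01234)`, `π1 = (01432)`, `π2 = (04312)`, `π3 = (03421)`. -/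
def pis : Fin 4 → Equiv.Perm (Fin 5) :=
  ![cyc5 0 1 2 3 4, cyc5 0 1 4 3 2, cyc5 0 4 3 1 2, cyc5 0 3 4 2 1]

/-!
An antiroute is found by a finite search: its first transposition swaps two symbols adjacent in
the current rotation, and the remaining transpositions form a route from the conjugate. This
search forces `P 0 1 = {(0 1)}`, `P 0 2 = {(1 2)}`, `P 0 3 = {(3 4)}`, `P 1 2 = {(0 2), (3 4)}`
and leaves two candidates each for `P 1 3` and `P 2 3`. For each of the four resulting keys the
rotations are already incompatible along the path `2 - 1 - 0 - 3 - 4`: whatever `γ 0` is, the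
antiroutes `Q 0 1` and `Q 0 3` leave only a few choices for `γ 1` and `γ 3`, and then `Q 1 2`
is no antiroute out of `γ 1` or `Q 3 4` is none out of `γ 3`.
-/

open Equiv Finset

section Routes

variable {α : Type*} [Fintype α] [DecidableEq α] {γ κ τ : Perm α} {P : Finset (Perm α)}

def adjSwaps (γ : Perm α) : Finset (Perm α) :=
  (univ.filter fun x => γ x ≠ x).image fun x => swap x (γ x)

theorem mem_adjSwaps :
    τ ∈ adjSwaps γ ↔ ∃ x y, x ≠ y ∧ τ = swap x y ∧ (γ x = y ∨ γ y = x) := by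
  simp only [adjSwaps, mem_image, mem_filter, mem_univ, true_and]
  constructor
  · rintro ⟨x, hx, rfl⟩
    exact ⟨x, γ x, Ne.symm hx, rfl, Or.inl rfl⟩
  · rintro ⟨x, y, hxy, rfl, rfl | rfl⟩
    · exact ⟨x, Ne.symm hxy, rfl⟩
    · exact ⟨y, hxy, swap_comm _ _⟩

theorem routeList_cons_iff {L : List (Perm α)} :
    RouteList γ (τ :: L) κ ↔ τ ∈ adjSwaps γ ∧ RouteList (τ * γ * τ) L κ := by
  rw [RouteList, mem_adjSwaps]
  constructor
  · rintro ⟨x, y, hxy, hτ, hadj, hL⟩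
    exact ⟨⟨x, y, hxy, hτ, hadj⟩, hL⟩
  · rintro ⟨⟨x, y, hxy, hτ, hadj⟩, hL⟩
    exact ⟨x, y, hxy, hτ, hadj, hL⟩

theorem isRoute_empty_iff : IsRoute γ κ ∅ ↔ γ = κ := by
  constructor
  · rintro ⟨L, -, hL, hr⟩
    rw [List.toFinset_eq_empty_iff] at hL
    subst hL
    exact hr
  · rintro rfl
    exact ⟨[], List.nodup_nil, rfl, rfl⟩

theorem isRoute_iff_exists_mem (hP : P.Nonempty) :
    IsRoute γ κ P ↔ ∃ τ ∈ adjSwaps γ, τ ∈ P ∧ IsRoute (τ * γ * τ) κ (P.erase τ) := by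
  constructor
  · rintro ⟨_ | ⟨τ, L⟩, hnd, rfl, hr⟩
    · simp at hP
    rw [List.nodup_cons] at hnd
    rw [routeList_cons_iff] at hr
    refine ⟨τ, hr.1, by simp, L, hnd.2, ?_, hr.2⟩
    rw [List.toFinset_cons, erase_insert (by simpa using hnd.1)]
  · rintro ⟨τ, hadj, hτ, L, hnd, hL, hr⟩
    refine ⟨τ :: L, List.nodup_cons.2 ⟨fun h => ?_, hnd⟩, ?_, routeList_cons_iff.2 ⟨hadj, hr⟩⟩
    · simpa [hL] using List.mem_toFinset.2 h
    · rw [List.toFinset_cons, hL, insert_erase hτ]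

def routes : ℕ → Perm α → Finset (Finset (Perm α) × Perm α)
  | 0, γ => {(∅, γ)}
  | n + 1, γ => (adjSwaps γ).biUnion fun τ =>
      ((routes n (τ * γ * τ)).filter fun r => τ ∉ r.1).image fun r => (insert τ r.1, r.2)

theorem mem_routes {n : ℕ} : (P, κ) ∈ routes n γ ↔ IsRoute γ κ P ∧ P.card = n := by
  induction n generalizing γ κ P with
  | zero =>
    simp only [routes, mem_singleton, Prod.mk.injEq, card_eq_zero]
    constructor
    · rintro ⟨rfl, rfl⟩
      exact ⟨isRoute_empty_iff.2 rfl, rfl⟩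
    · rintro ⟨h, rfl⟩
      exact ⟨rfl, (isRoute_empty_iff.1 h).symm⟩
  | succ n ih =>
    simp only [routes, mem_biUnion, mem_image, mem_filter, Prod.exists, Prod.mk.injEq, ih]
    constructor
    · rintro ⟨τ, hadj, P', _, ⟨⟨hr, hcard⟩, hτ⟩, rfl, rfl⟩
      refine ⟨(isRoute_iff_exists_mem (insert_nonempty _ _)).2
        ⟨τ, hadj, mem_insert_self _ _, by rwa [erase_insert hτ]⟩, ?_⟩
      rw [card_insert_of_notMem hτ, hcard]
    · rintro ⟨hr, hcard⟩
      obtain ⟨τ, hadj, hτ, hr'⟩ := (isRoute_iff_exists_mem (card_pos.1 (by omega))).1 hr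
      exact ⟨τ, hadj, P.erase τ, κ, ⟨⟨hr', by rw [card_erase_of_mem hτ, hcard]; rfl⟩,
        notMem_erase _ _⟩, insert_erase hτ, rfl⟩

def antiroutesOfCard (γ κ : Perm α) (n : ℕ) : Finset (Finset (Perm α)) :=
  ((routes n γ).filter fun r => r.2 = κ⁻¹).image Prod.fst

theorem mem_antiroutesOfCard {n : ℕ} :
    P ∈ antiroutesOfCard γ κ n ↔ IsAntiroute γ κ P ∧ P.card = n := by
  simp [antiroutesOfCard, IsAntiroute, ← mem_routes]

def antirouteEnds (γ : Perm α) (Q : Finset (Perm α)) : Finset (Perm α) :=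
  ((routes Q.card γ).filter fun r => r.1 = Q).image fun r => r.2⁻¹

theorem mem_antirouteEnds {Q : Finset (Perm α)} :
    κ ∈ antirouteEnds γ Q ↔ IsAntiroute γ κ Q := by
  simp only [antirouteEnds, IsAntiroute, mem_image, mem_filter, Prod.exists, mem_routes]
  constructor
  · rintro ⟨P, κ', ⟨⟨hr, -⟩, rfl⟩, rfl⟩
    rwa [inv_inv]
  · intro hr
    exact ⟨Q, κ⁻¹, ⟨⟨hr, rfl⟩, rfl⟩, inv_inv κ⟩

/-- No rotations `γ₀, …, γ₄` are compatible along the path `2 - 1 - 0 - 3 - 4`. -/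
def PathObstructed (Q : Fin 5 → Fin 5 → Finset (Perm α)) : Prop :=
  ∀ g₀ : Perm α, ∀ g₁ ∈ antirouteEnds g₀ (Q 0 1), ∀ g₃ ∈ antirouteEnds g₀ (Q 0 3),
    antirouteEnds g₁ (Q 1 2) = ∅ ∨ antirouteEnds g₃ (Q 3 4) = ∅

instance : DecidablePred (PathObstructed (α := α)) := fun _ => by
  dsimp only [PathObstructed]
  infer_instance

theorem PathObstructed.not_exists {Q : Fin 5 → Fin 5 → Finset (Perm α)} (h : PathObstructed Q) :
    ¬ ∃ γ : Fin 5 → Perm α, ∀ k l, k ≠ l → IsAntiroute (γ k) (γ l) (Q k l) := by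
  rintro ⟨γ, hγ⟩
  have ends (k l : Fin 5) (hkl : k ≠ l) : γ l ∈ antirouteEnds (γ k) (Q k l) :=
    mem_antirouteEnds.2 (hγ k l hkl)
  rcases h (γ 0) (γ 1) (ends 0 1 (by decide)) (γ 3) (ends 0 3 (by decide)) with h12 | h34
  · simpa [h12] using ends 1 2 (by decide)
  · simpa [h34] using ends 3 4 (by decide)

end Routes

def keyOf (P01 P02 P03 P12 P13 P23 : Finset (Perm (Fin 5))) :
    Fin 4 → Fin 4 → Finset (Perm (Fin 5)) :=
  ![![∅, P01, P02, P03], ![∅, ∅, P12, P13], ![∅, ∅, ∅, P23], ![∅, ∅, ∅, ∅]]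

/-- `Qset` only reads the entries above the diagonal, so this holds by evaluation. -/
theorem Qset_keyOf (P : Fin 4 → Fin 4 → Finset (Perm (Fin 5))) :
    Qset (keyOf (P 0 1) (P 0 2) (P 0 3) (P 1 2) (P 1 3) (P 2 3)) = Qset P :=
  rfl

theorem antiroutesOfCard_pis :
    antiroutesOfCard (pis 0) (pis 1) 1 = {{swap 0 1}} ∧
    antiroutesOfCard (pis 0) (pis 2) 1 = {{swap 1 2}} ∧
    antiroutesOfCard (pis 0) (pis 3) 1 = {{swap 3 4}} ∧
    antiroutesOfCard (pis 1) (pis 2) 2 = {{swap 0 2, swap 3 4}} ∧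
    antiroutesOfCard (pis 1) (pis 3) 2 = {{swap 0 2, swap 1 2}, {swap 2 3, swap 2 4}} ∧
    antiroutesOfCard (pis 2) (pis 3) 2 = {{swap 0 1, swap 0 2}, {swap 0 3, swap 0 4}} := by
  decide

theorem pathObstructed_Qset_keyOf :
    ∀ P13 ∈ ({{swap 0 2, swap 1 2}, {swap 2 3, swap 2 4}} : Finset (Finset (Perm (Fin 5)))),
    ∀ P23 ∈ ({{swap 0 1, swap 0 2}, {swap 0 3, swap 0 4}} : Finset (Finset (Perm (Fin 5)))),
    PathObstructed
      (Qset (keyOf {swap 0 1} {swap 1 2} {swap 3 4} {swap 0 2, swap 3 4} P13 P23)) := by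
  simp only [mem_insert, mem_singleton, forall_eq_or_imp, forall_eq]
  refine ⟨⟨?_, ?_⟩, ?_, ?_⟩ <;> decide +kernel

/-- There do not exist cyclic permutations `γ0, …, γ4` of a 4-element set, together with
antiroutes `P i j` from `π i` to `π j` with `|P 0 1| = |P 0 2| = |P 0 3| = 1` and
`|P 1 2| = |P 1 3| = |P 2 3| = 2`, such that for all `k ≠ ℓ` the set `Q_{kℓ}` is an
antiroute from `γ k` to `γ ℓ`. -/
theorem no_key_star_configuration :
    ¬ ∃ (γ : Fin 5 → Equiv.Perm (Fin 4))
        (P : Fin 4 → Fin 4 → Finset (Equiv.Perm (Fin 5))),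
      (∀ k, IsCyclicPerm (γ k)) ∧
      (∀ i j : Fin 4, i < j → IsAntiroute (pis i) (pis j) (P i j)) ∧
      (P 0 1).card = 1 ∧ (P 0 2).card = 1 ∧ (P 0 3).card = 1 ∧
      (P 1 2).card = 2 ∧ (P 1 3).card = 2 ∧ (P 2 3).card = 2 ∧
      (∀ k l : Fin 5, k ≠ l → IsAntiroute (γ k) (γ l) (Qset P k l)) := by
  rintro ⟨γ, P, -, hP, h01, h02, h03, h12, h13, h23, hQ⟩
  have hmem (i j : Fin 4) (hij : i < j) : P i j ∈ antiroutesOfCard (pis i) (pis j) (P i j).card :=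
    mem_antiroutesOfCard.2 ⟨hP i j hij, rfl⟩
  obtain ⟨e01, e02, e03, e12, e13, e23⟩ := antiroutesOfCard_pis
  have hP01 : P 0 1 = {swap 0 1} := by simpa [h01, e01] using hmem 0 1 (by decide)
  have hP02 : P 0 2 = {swap 1 2} := by simpa [h02, e02] using hmem 0 2 (by decide)
  have hP03 : P 0 3 = {swap 3 4} := by simpa [h03, e03] using hmem 0 3 (by decide)
  have hP12 : P 1 2 = {swap 0 2, swap 3 4} := by simpa [h12, e12] using hmem 1 2 (by decide)
  have hP13 := hmem 1 3 (by decide)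
  have hP23 := hmem 2 3 (by decide)
  rw [h13, e13] at hP13
  rw [h23, e23] at hP23
  have hK : PathObstructed (Qset P) := by
    rw [← Qset_keyOf, hP01, hP02, hP03, hP12]
    exact pathObstructed_Qset_keyOf _ hP13 _ hP23
  exact hK.not_exists ⟨γ, hQ⟩
end

section
/- Let G be a finite simple graph which is connected, bipartite, has at most 7 vertices, has minimum degree at least 2 and maximum degree at most 3, contains no subgraph isomorphic to K_{2,3}, contains no subgraph isomorphic to the 7-vertex graph S obtained from K4 by subdividing exactly once each of the three edges of one triangle, and in which every vertex of degree 2 lies on a cycle of length 4. Then G is isomorphic either to the 4-cycle C4 or to C̄6. -/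
/-- The 4-cycle `C4`, with vertices `0,1,2,3` and edges `01, 12, 23, 30`. -/
def cycle4 : SimpleGraph (Fin 4) := SimpleGraph.fromRel (fun i j => j = i + 1)

/-- `C̄6`: the 6-cycle with vertices `0,…,5` together with the diametral edge `03`. -/
def c6bar : SimpleGraph (Fin 6) :=
  SimpleGraph.fromRel (fun i j => j = i + 1 ∨ (i = 0 ∧ j = 3))

/-- The complete bipartite graph `K_{2,3}`, with parts `{0,1}` and `{2,3,4}`. -/
def k23 : SimpleGraph (Fin 5) :=
  SimpleGraph.fromRel (fun i j => i.val < 2 ∧ 2 ≤ j.val)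

/-- The 7-vertex graph `S` obtained from `K4` on `{0,1,2,3}` by subdividing exactly once
each of the three edges of the triangle `{1,2,3}`: vertex `4` subdivides `12`, vertex `5`
subdivides `23`, and vertex `6` subdivides `13`. -/
def sGraph : SimpleGraph (Fin 7) :=
  SimpleGraph.fromRel (fun i j =>
    (i = 0 ∧ j = 1) ∨ (i = 0 ∧ j = 2) ∨ (i = 0 ∧ j = 3) ∨
    (i = 1 ∧ j = 4) ∨ (i = 2 ∧ j = 4) ∨ (i = 2 ∧ j = 5) ∨
    (i = 3 ∧ j = 5) ∨ (i = 1 ∧ j = 6) ∨ (i = 3 ∧ j = 6))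

/-- `G` contains `H` as a subgraph: there is an injective graph homomorphism `H → G`. -/
def ContainsSubgraph {V W : Type*} (G : SimpleGraph V) (H : SimpleGraph W) : Prop :=
  ∃ f : H →g G, Function.Injective f

/-- `G` is bipartite: its vertex set admits a partition into two independent sets. -/
def IsBipartite {V : Type*} (G : SimpleGraph V) : Prop :=
  ∃ A : Set V, ∀ u v, G.Adj u v → ((u ∈ A) ↔ (v ∉ A))

/-!
Let `s` and `t` be the two sides, with `#s ≤ #t`; minimum degree `2` gives `2 ≤ #s`, so
`#s ∈ {2, 3}`. Without `K_{2,3}`, two vertices have at most two common neighbours. If `#s = 2`,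
every vertex of `t` is joined to both vertices of `s`, so `#t = 2` and `G = K_{2,2} = C4`.

The 4-cycle through a degree-2 vertex `a` ends at a vertex `y ≠ a` of the same side with
`N(a) ⊆ N(y)`; and when `#s = 3`, a vertex of `t` that misses `a` is joined to all of `s - a`.
For `#t = 4` this puts all of `t` into `N(y)`, contradicting `Δ ≤ 3`, so every vertex of `s` has
degree `3` and `G` is `K_{3,4}` minus a matching of `s`, which is `S`. For `#t = 3` the same
argument gives a vertex of degree `3` on each side, unique by the `K_{2,3}` bound, so `G` has
seven edges and contains `C̄6`; being as large as `C̄6`, it is `C̄6`.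
-/

open Finset

instance : DecidableRel cycle4.Adj := fun i j => decidable_of_iff' _ (SimpleGraph.fromRel_adj _ i j)

instance : DecidableRel c6bar.Adj := fun i j => decidable_of_iff' _ (SimpleGraph.fromRel_adj _ i j)

namespace SimpleGraph

variable {V W : Type*} {G : SimpleGraph V}

def Hom.ofRel {r : W → W → Prop} (f : W → V) (hr : ∀ i j, r i j → G.Adj (f i) (f j)) :
    fromRel r →g G where
  toFun := f
  map_rel' := fun ⟨_, h⟩ => h.elim (hr _ _) fun h => (hr _ _ h).symm

theorem containsSubgraph_fromRel {r : W → W → Prop} (f : W → V) (hf : Function.Injective f)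
    (hr : ∀ i j, r i j → G.Adj (f i) (f j)) : ContainsSubgraph G (fromRel r) :=
  ⟨Hom.ofRel f hr, hf⟩

theorem Hom.nonempty_iso_of_injective [Fintype V] [Fintype W] [DecidableRel G.Adj]
    {H : SimpleGraph W} [DecidableRel H.Adj] (f : H →g G) (hf : Function.Injective f)
    (hV : Fintype.card V ≤ Fintype.card W) (hE : #G.edgeFinset ≤ #H.edgeFinset) :
    Nonempty (G ≃g H) := by
  have hbij : Function.Bijective f := (Fintype.bijective_iff_injective_and_card f).2
    ⟨hf, le_antisymm (Fintype.card_le_of_injective f hf) hV⟩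
  let fSym2 : Sym2 W ↪ Sym2 V := ⟨Sym2.map f, Sym2.map.injective hf⟩
  have hmap : H.edgeFinset.map fSym2 = G.edgeFinset :=
    eq_of_subset_of_card_le
      (fun e he => by
        obtain ⟨e', he', rfl⟩ := mem_map.1 he
        exact mem_edgeFinset.2 (f.map_mem_edgeSet (mem_edgeFinset.1 he')))
      (by rwa [card_map])
  refine ⟨(RelIso.mk (Equiv.ofBijective f hbij) fun {i j} => ⟨fun hadj => ?_, f.map_adj⟩).symm⟩
  obtain ⟨e, he, hfe⟩ := mem_map.1 (hmap ▸ mem_edgeFinset.2 hadj : s(f i, f j) ∈ _)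
  rw [show s(f i, f j) = fSym2 s(i, j) from rfl, fSym2.injective.eq_iff] at hfe
  exact mem_edgeFinset.1 (hfe ▸ he)

theorem _root_.IsBipartite.exists_finset_isBipartiteWith [Fintype V] [DecidableEq V]
    (hG : _root_.IsBipartite G) : ∃ s : Finset V, G.IsBipartiteWith ↑s ↑sᶜ := by
  classical
  obtain ⟨A, hA⟩ := hG
  refine ⟨A.toFinset, disjoint_coe.2 disjoint_compl_right, fun v w hvw => ?_⟩
  have := hA v w hvw
  simp only [coe_compl, Set.coe_toFinset, Set.mem_compl_iff]
  tauto

variable [Fintype V] [DecidableRel G.Adj]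

theorem IsBipartiteWith.two_le_card {s t : Finset V} (h : G.IsBipartiteWith s t)
    (hmin : ∀ v, 2 ≤ G.degree v) {v w : V} (hvw : G.Adj v w) : 2 ≤ #s ∧ 2 ≤ #t := by
  rcases h.mem_of_adj hvw with ⟨hv, hw⟩ | ⟨hv, hw⟩
  · exact ⟨(hmin w).trans (isBipartiteWith_degree_le' h hw),
      (hmin v).trans (isBipartiteWith_degree_le h hv)⟩
  · exact ⟨(hmin v).trans (isBipartiteWith_degree_le' h hv),
      (hmin w).trans (isBipartiteWith_degree_le h hw)⟩

theorem IsBipartiteWith.neighborFinset_eq_of_card_le {s t : Finset V}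
    (h : G.IsBipartiteWith s t) {a : V} (ha : a ∈ s) (hdeg : #t ≤ G.degree a) :
    G.neighborFinset a = t :=
  eq_of_subset_of_card_le (isBipartiteWith_neighborFinset_subset h ha)
    (by rwa [card_neighborFinset_eq_degree])

variable [DecidableEq V]

theorem card_neighborFinset_inter_le_two (hK23 : ¬ ContainsSubgraph G k23) {u v : V}
    (huv : u ≠ v) : #(G.neighborFinset u ∩ G.neighborFinset v) ≤ 2 := by
  by_contra! h
  obtain ⟨a, ha, b, hb, c, hc, hab, hac, hbc⟩ := two_lt_card.1 h
  simp only [mem_inter, mem_neighborFinset] at ha hb hc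
  refine hK23 (containsSubgraph_fromRel ![u, v, a, b, c] ?_ ?_)
  · rw [← List.nodup_ofFn]
    simp [huv, hab, hac, hbc, ha.1.ne, hb.1.ne, hc.1.ne, ha.2.ne, hb.2.ne, hc.2.ne]
  · intro i j hij
    fin_cases i <;> fin_cases j <;> first | exact absurd hij (by decide) | simp [ha, hb, hc]

theorem Walk.IsCycle.exists_ne_neighborFinset_subset {v : V} {c : G.Walk v v} (hc : c.IsCycle)
    (hl : c.length = 4) (hv : G.degree v = 2) :
    ∃ y ≠ v, G.neighborFinset v ⊆ G.neighborFinset y := by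
  have hadj (i : ℕ) (hi : i < 4) : G.Adj (c.getVert i) (c.getVert (i + 1)) :=
    c.adj_getVert_succ (hl ▸ hi)
  have hne (i j : ℕ) (hi : 1 ≤ i) (hij : i < j) (hj : j ≤ 4) : c.getVert i ≠ c.getVert j :=
    fun h => hij.ne (hc.getVert_injOn ⟨hi, by omega⟩ ⟨by omega, by omega⟩ h)
  have h₄ : c.getVert 4 = v := hl ▸ c.getVert_length
  have e₀ : G.Adj v (c.getVert 1) := by simpa using hadj 0 (by norm_num)
  have e₃ : G.Adj (c.getVert 3) v := by simpa [h₄] using hadj 3 (by norm_num)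
  have hN : G.neighborFinset v = {c.getVert 1, c.getVert 3} := by
    refine (eq_of_subset_of_card_le ?_ ?_).symm
    · simp [insert_subset_iff, e₀, e₃.symm]
    · rw [card_neighborFinset_eq_degree, hv,
        card_pair (hne 1 3 le_rfl (by norm_num) (by norm_num))]
  refine ⟨c.getVert 2, fun h => hne 2 4 (by norm_num) (by norm_num) le_rfl (h.trans h₄.symm), ?_⟩
  simp [hN, insert_subset_iff, (hadj 1 (by norm_num)).symm, hadj 2 (by norm_num)]

namespace IsBipartiteWith

variable {s t : Finset V}

theorem card_edgeFinset_eq (h : G.IsBipartiteWith s t) {a₀ : V} (ha₀ : a₀ ∈ s)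
    (hN₀ : G.neighborFinset a₀ = t) (hdeg : ∀ a ∈ s, a ≠ a₀ → G.degree a = 2) :
    #G.edgeFinset = #t + 2 * (#s - 1) := by
  rw [← isBipartiteWith_sum_degrees_eq_card_edges h, ← add_sum_erase s _ ha₀,
    sum_congr rfl fun a ha => hdeg a (mem_of_mem_erase ha) (ne_of_mem_erase ha), sum_const,
    card_erase_of_mem ha₀, ← card_neighborFinset_eq_degree, hN₀, smul_eq_mul, mul_comm]

theorem exists_adj_of_ne (h : G.IsBipartiteWith s t) {a : V} (ha : a ∈ s)
    (hdeg : G.degree a + 1 = #t) : ∃ c ∈ t, ∀ b ∈ t, b ≠ c → G.Adj a b := by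
  obtain ⟨c, hc⟩ := card_eq_one.1 (show #(t \ G.neighborFinset a) = 1 by
    rw [card_sdiff_of_subset (isBipartiteWith_neighborFinset_subset h ha),
      card_neighborFinset_eq_degree]
    omega)
  have hc' (b : V) : b ∈ t ∧ ¬ G.Adj a b ↔ b = c := by simpa using congr(b ∈ $hc)
  refine ⟨c, ((hc' c).2 rfl).1, fun b hb hbc => ?_⟩
  by_contra hab
  exact hbc ((hc' b).1 ⟨hb, hab⟩)

theorem adj_of_not_adj (h : G.IsBipartiteWith s t) (hmin : ∀ v, 2 ≤ G.degree v) (hs : #s = 3)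
    {a y b : V} (ha : a ∈ s) (hy : y ∈ s) (hya : y ≠ a) (hb : b ∈ t) (hab : ¬ G.Adj a b) :
    G.Adj y b := by
  have hN : G.neighborFinset b = s.erase a := by
    refine eq_of_subset_of_card_le (fun x hx => mem_erase.2 ⟨?_, ?_⟩) ?_
    · rintro rfl
      exact hab ((mem_neighborFinset _ _ _).1 hx).symm
    · exact isBipartiteWith_neighborFinset_subset' h hb hx
    · rw [card_erase_of_mem ha, card_neighborFinset_eq_degree, hs]
      exact hmin b
  exact ((mem_neighborFinset _ _ _).1 (hN ▸ mem_erase.2 ⟨hya, hy⟩)).symm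

theorem exists_mem_ne_neighborFinset_subset (h : G.IsBipartiteWith s t) {a : V} (ha : a ∈ s)
    (hdeg : G.degree a = 2) (hcyc : ∃ c : G.Walk a a, c.IsCycle ∧ c.length = 4) :
    ∃ y ∈ s, y ≠ a ∧ G.neighborFinset a ⊆ G.neighborFinset y := by
  obtain ⟨c, hc, hl⟩ := hcyc
  obtain ⟨y, hya, hsub⟩ := hc.exists_ne_neighborFinset_subset hl hdeg
  obtain ⟨x, hx⟩ : (G.neighborFinset a).Nonempty := by
    rw [← card_pos, card_neighborFinset_eq_degree, hdeg]
    norm_num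
  have hxt : x ∈ t := isBipartiteWith_neighborFinset_subset h ha hx
  exact ⟨y, h.mem_of_mem_adj' hxt ((mem_neighborFinset _ _ _).1 (hsub hx)), hya, hsub⟩

theorem degree_lt_card_of_ne (h : G.IsBipartiteWith s t) (hK23 : ¬ ContainsSubgraph G k23)
    (ht : 2 < #t) {a₀ a : V} (ha₀ : G.neighborFinset a₀ = t) (ha : a ∈ s) (hne : a ≠ a₀) :
    G.degree a < #t := by
  by_contra! hdeg
  have := card_neighborFinset_inter_le_two hK23 hne
  rw [h.neighborFinset_eq_of_card_le ha hdeg, ha₀, inter_self] at this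
  omega

theorem card_le_two_of_card_eq_two (h : G.IsBipartiteWith s t) (hmin : ∀ v, 2 ≤ G.degree v)
    (hK23 : ¬ ContainsSubgraph G k23) (hs : #s = 2) : #t ≤ 2 := by
  obtain ⟨a₁, a₂, hne, rfl⟩ := card_eq_two.1 hs
  refine (card_le_card fun b hb => ?_).trans (card_neighborFinset_inter_le_two hK23 hne)
  have hN := h.symm.neighborFinset_eq_of_card_le hb (hs ▸ hmin b)
  have hadj (a : V) (ha : a ∈ ({a₁, a₂} : Finset V)) : b ∈ G.neighborFinset a :=
    (mem_neighborFinset _ _ _).2 ((mem_neighborFinset _ _ _).1 (hN ▸ ha)).symm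
  exact mem_inter.2 ⟨hadj a₁ (by simp), hadj a₂ (by simp)⟩

theorem nonempty_iso_cycle4 (h : G.IsBipartiteWith s t) (hmin : ∀ v, 2 ≤ G.degree v)
    (hs : #s = 2) (ht : #t = 2) (hV : Fintype.card V ≤ 4) : Nonempty (G ≃g cycle4) := by
  obtain ⟨a₁, a₂, ha, rfl⟩ := card_eq_two.1 hs
  obtain ⟨b₁, b₂, hb, rfl⟩ := card_eq_two.1 ht
  have hadj : ∀ a ∈ ({a₁, a₂} : Finset V), ∀ b ∈ ({b₁, b₂} : Finset V), G.Adj a b :=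
    fun a ha b hb => (mem_neighborFinset _ _ _).1 <|
      (h.neighborFinset_eq_of_card_le ha (ht ▸ hmin a)).symm ▸ hb
  refine Hom.nonempty_iso_of_injective (Hom.ofRel ![a₁, b₁, a₂, b₂] ?_) ?_ (by simpa) ?_
  · intro i j hij
    fin_cases i <;> fin_cases j <;>
      first | exact absurd hij (by decide) | simp [hadj, G.adj_comm b₁, G.adj_comm b₂]
  · show Function.Injective ![a₁, b₁, a₂, b₂]
    rw [← List.nodup_ofFn]
    simp [ha, hb, h.disjoint.ne_of_mem, h.disjoint.symm.ne_of_mem]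
  · have h₁ := isBipartiteWith_degree_le h (mem_insert_self a₁ {a₂})
    have h₂ := isBipartiteWith_degree_le h (mem_insert_of_mem (mem_singleton_self a₂))
    have hC4 : #cycle4.edgeFinset = 4 := by decide
    rw [← isBipartiteWith_sum_degrees_eq_card_edges h, sum_pair ha, hC4]
    omega

theorem exists_neighborFinset_eq (h : G.IsBipartiteWith s t) (hmin : ∀ v, 2 ≤ G.degree v)
    (h4cyc : ∀ v, G.degree v = 2 → ∃ c : G.Walk v v, c.IsCycle ∧ c.length = 4)
    (hs : #s = 3) (ht : #t = 3) : ∃ a ∈ s, G.neighborFinset a = t := by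
  by_contra! hne
  have hdeg : ∀ a ∈ s, G.degree a = 2 := fun a ha => by
    have := isBipartiteWith_degree_le h ha
    have : G.degree a ≠ 3 := fun h3 => hne a ha (h.neighborFinset_eq_of_card_le ha (by omega))
    have := hmin a
    omega
  obtain ⟨a, ha⟩ : s.Nonempty := card_pos.1 (by omega)
  obtain ⟨y, hy, hya, hsub⟩ :=
    h.exists_mem_ne_neighborFinset_subset ha (hdeg a ha) (h4cyc a (hdeg a ha))
  have hNy : G.neighborFinset y ⊆ G.neighborFinset a :=
    (eq_of_subset_of_card_le hsub (by simp [hdeg a ha, hdeg y hy])).ge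
  obtain ⟨b, hb, hab⟩ := exists_mem_notMem_of_card_lt_card
    (s := G.neighborFinset a) (t := t) (by simp [hdeg a ha, ht])
  rw [mem_neighborFinset] at hab
  exact hab ((mem_neighborFinset _ _ _).1
    (hNy ((mem_neighborFinset _ _ _).2 (h.adj_of_not_adj hmin hs ha hy hya hb hab))))

theorem containsSubgraph_c6bar (h : G.IsBipartiteWith s t) (hmin : ∀ v, 2 ≤ G.degree v)
    (hs : #s = 3) (ht : #t = 3) {a₀ b₀ : V} (hN₀ : G.neighborFinset a₀ = t)
    (hb₀ : b₀ ∈ t) (hM₀ : G.neighborFinset b₀ = s) (hdeg : ∀ a ∈ s, a ≠ a₀ → G.degree a = 2) :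
    ContainsSubgraph G c6bar := by
  obtain ⟨a₁, ha₁, ha₁₀⟩ := exists_mem_ne (by omega : 1 < #s) a₀
  obtain ⟨a₂, ha₂, ha₂'⟩ := exists_mem_notMem_of_card_lt_card
    (s := {a₀, a₁}) (t := s) (card_le_two.trans_lt (by omega))
  have hN₁ : #(G.neighborFinset a₁) = 2 := by
    rw [card_neighborFinset_eq_degree, hdeg a₁ ha₁ ha₁₀]
  obtain ⟨c₁, hc₁, hc₁₀⟩ := exists_mem_ne (by omega : 1 < #(G.neighborFinset a₁)) b₀
  obtain ⟨c₂, hc₂, hc₂'⟩ := exists_mem_notMem_of_card_lt_card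
    (s := G.neighborFinset a₁) (t := t) (by omega)
  have hc₁t : c₁ ∈ t := isBipartiteWith_neighborFinset_subset h ha₁ hc₁
  simp only [mem_insert, mem_singleton, not_or] at ha₂'
  rw [mem_neighborFinset] at hc₁ hc₂'
  have hadj₀ : ∀ b ∈ t, G.Adj a₀ b := fun b hb => (mem_neighborFinset _ _ _).1 (hN₀ ▸ hb)
  have hadj₀' : ∀ a ∈ s, G.Adj b₀ a := fun a ha => (mem_neighborFinset _ _ _).1 (hM₀ ▸ ha)
  -- the hexagon `a₀ c₁ a₁ b₀ a₂ c₂` with chord `a₀b₀`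
  have e₀₁ : G.Adj a₀ c₁ := hadj₀ c₁ hc₁t
  have e₁₂ : G.Adj c₁ a₁ := hc₁.symm
  have e₂₃ : G.Adj a₁ b₀ := (hadj₀' a₁ ha₁).symm
  have e₃₄ : G.Adj b₀ a₂ := hadj₀' a₂ ha₂
  have e₄₅ : G.Adj a₂ c₂ := h.adj_of_not_adj hmin hs ha₁ ha₂ ha₂'.2 hc₂ hc₂'
  have e₅₀ : G.Adj c₂ a₀ := (hadj₀ c₂ hc₂).symm
  have e₀₃ : G.Adj a₀ b₀ := hadj₀ b₀ hb₀
  refine containsSubgraph_fromRel ![a₀, c₁, a₁, b₀, a₂, c₂] ?_ ?_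
  · rw [← List.nodup_ofFn]
    have hc₁₂ : c₁ ≠ c₂ := fun h => hc₂' (h ▸ hc₁)
    have hb₀₂ : b₀ ≠ c₂ := fun h => hc₂' (h ▸ e₂₃)
    simp [e₀₁.ne, e₁₂.ne, e₂₃.ne, e₃₄.ne, e₄₅.ne, e₅₀.ne.symm, e₀₃.ne, ha₁₀.symm,
      Ne.symm ha₂'.1, Ne.symm ha₂'.2, hc₁₀, hc₁₂, hb₀₂, h.disjoint.ne_of_mem,
      h.disjoint.symm.ne_of_mem, ha₁, ha₂, hc₁t, hc₂]
  · intro i j hij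
    fin_cases i <;> fin_cases j <;> first | exact absurd hij (by decide) | assumption

theorem nonempty_iso_c6bar (h : G.IsBipartiteWith s t) (hmin : ∀ v, 2 ≤ G.degree v)
    (hK23 : ¬ ContainsSubgraph G k23)
    (h4cyc : ∀ v, G.degree v = 2 → ∃ c : G.Walk v v, c.IsCycle ∧ c.length = 4)
    (hs : #s = 3) (ht : #t = 3) (hV : Fintype.card V ≤ 6) : Nonempty (G ≃g c6bar) := by
  obtain ⟨a₀, ha₀, hN₀⟩ := h.exists_neighborFinset_eq hmin h4cyc hs ht
  obtain ⟨b₀, hb₀, hM₀⟩ := h.symm.exists_neighborFinset_eq hmin h4cyc ht hs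
  have hdeg : ∀ a ∈ s, a ≠ a₀ → G.degree a = 2 := fun a ha hne => by
    have := h.degree_lt_card_of_ne hK23 (by omega) hN₀ ha hne
    have := hmin a
    omega
  obtain ⟨f, hf⟩ := h.containsSubgraph_c6bar hmin hs ht hN₀ hb₀ hM₀ hdeg
  have hC6 : #c6bar.edgeFinset = 7 := by decide
  refine Hom.nonempty_iso_of_injective f hf (by simpa) ?_
  rw [h.card_edgeFinset_eq ha₀ hN₀ hdeg, hs, ht, hC6]

theorem degree_eq_three (h : G.IsBipartiteWith s t) (hmin : ∀ v, 2 ≤ G.degree v)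
    (hmax : ∀ v, G.degree v ≤ 3)
    (h4cyc : ∀ v, G.degree v = 2 → ∃ c : G.Walk v v, c.IsCycle ∧ c.length = 4)
    (hs : #s = 3) (ht : #t = 4) {a : V} (ha : a ∈ s) : G.degree a = 3 := by
  by_contra hne
  have hdeg : G.degree a = 2 := by
    have := hmin a
    have := hmax a
    omega
  obtain ⟨y, hy, hya, hsub⟩ := h.exists_mem_ne_neighborFinset_subset ha hdeg (h4cyc a hdeg)
  have hty : t ⊆ G.neighborFinset y := fun b hb => by
    by_cases hab : G.Adj a b
    · exact hsub ((mem_neighborFinset _ _ _).2 hab)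
    · exact (mem_neighborFinset _ _ _).2 (h.adj_of_not_adj hmin hs ha hy hya hb hab)
  have := card_le_card hty
  rw [card_neighborFinset_eq_degree, ht] at this
  have := hmax y
  omega

theorem containsSubgraph_sGraph (h : G.IsBipartiteWith s t) (hK23 : ¬ ContainsSubgraph G k23)
    (hs : #s = 3) (ht : #t = 4) (hdeg : ∀ a ∈ s, G.degree a = 3) :
    ContainsSubgraph G sGraph := by
  -- `m a` is the vertex of `t` missed by `a`; the vertex `b₀` missed by nobody is the centre of `S`
  choose! m hmt hm using fun a ha => h.exists_adj_of_ne ha (by rw [hdeg a ha, ht])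
  have hm_ne : ∀ a ∈ s, ∀ a' ∈ s, a ≠ a' → m a ≠ m a' := by
    intro a ha a' ha' hne heq
    have hsub : t.erase (m a) ⊆ G.neighborFinset a ∩ G.neighborFinset a' := fun b hb => by
      obtain ⟨hbm, hb⟩ := mem_erase.1 hb
      simp only [mem_inter, mem_neighborFinset]
      exact ⟨hm a ha b hb hbm, hm a' ha' b hb (heq ▸ hbm)⟩
    have := (card_le_card hsub).trans (card_neighborFinset_inter_le_two hK23 hne)
    rw [card_erase_of_mem (hmt a ha), ht] at this
    omega
  obtain ⟨a₁, a₂, a₃, h₁₂, h₁₃, h₂₃, rfl⟩ := card_eq_three.1 hs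
  obtain ⟨b₀, hb₀, hb₀'⟩ := exists_mem_notMem_of_card_lt_card
    (s := {m a₁, m a₂, m a₃}) (t := t) (card_le_three.trans_lt (by omega))
  simp only [mem_insert, mem_singleton, not_or] at hb₀'
  have ha₁ : a₁ ∈ ({a₁, a₂, a₃} : Finset V) := by simp
  have ha₂ : a₂ ∈ ({a₁, a₂, a₃} : Finset V) := by simp
  have ha₃ : a₃ ∈ ({a₁, a₂, a₃} : Finset V) := by simp
  have hm₁₂ := hm_ne _ ha₁ _ ha₂ h₁₂
  have hm₁₃ := hm_ne _ ha₁ _ ha₃ h₁₃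
  have hm₂₃ := hm_ne _ ha₂ _ ha₃ h₂₃
  have e₀₁ : G.Adj b₀ a₁ := (hm _ ha₁ _ hb₀ hb₀'.1).symm
  have e₀₂ : G.Adj b₀ a₂ := (hm _ ha₂ _ hb₀ hb₀'.2.1).symm
  have e₀₃ : G.Adj b₀ a₃ := (hm _ ha₃ _ hb₀ hb₀'.2.2).symm
  have e₁₄ : G.Adj a₁ (m a₃) := hm _ ha₁ _ (hmt _ ha₃) hm₁₃.symm
  have e₂₄ : G.Adj a₂ (m a₃) := hm _ ha₂ _ (hmt _ ha₃) hm₂₃.symm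
  have e₂₅ : G.Adj a₂ (m a₁) := hm _ ha₂ _ (hmt _ ha₁) hm₁₂
  have e₃₅ : G.Adj a₃ (m a₁) := hm _ ha₃ _ (hmt _ ha₁) hm₁₃
  have e₁₆ : G.Adj a₁ (m a₂) := hm _ ha₁ _ (hmt _ ha₂) hm₁₂.symm
  have e₃₆ : G.Adj a₃ (m a₂) := hm _ ha₃ _ (hmt _ ha₂) hm₂₃
  refine containsSubgraph_fromRel ![b₀, a₁, a₂, a₃, m a₃, m a₁, m a₂] ?_ ?_
  · rw [← List.nodup_ofFn]
    simp [h₁₂, h₁₃, h₂₃, hm₁₂, hm₁₃.symm, hm₂₃.symm, hb₀', hb₀, hmt, h.disjoint.ne_of_mem,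
      h.disjoint.symm.ne_of_mem]
  · intro i j hij
    fin_cases i <;> fin_cases j <;> first | exact absurd hij (by decide) | assumption

theorem nonempty_iso_cycle4_or_c6bar (h : G.IsBipartiteWith s t)
    (hmin : ∀ v, 2 ≤ G.degree v) (hmax : ∀ v, G.degree v ≤ 3)
    (hK23 : ¬ ContainsSubgraph G k23) (hS : ¬ ContainsSubgraph G sGraph)
    (h4cyc : ∀ v, G.degree v = 2 → ∃ c : G.Walk v v, c.IsCycle ∧ c.length = 4)
    (h2 : 2 ≤ #s) (hst : #s ≤ #t) (hV : #s + #t = Fintype.card V) (h7 : Fintype.card V ≤ 7) :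
    Nonempty (G ≃g cycle4) ∨ Nonempty (G ≃g c6bar) := by
  obtain hs | hs : #s = 2 ∨ #s = 3 := by omega
  · have := h.card_le_two_of_card_eq_two hmin hK23 hs
    exact .inl (h.nonempty_iso_cycle4 hmin hs (by omega) (by omega))
  obtain ht | ht : #t = 3 ∨ #t = 4 := by omega
  · exact .inr (h.nonempty_iso_c6bar hmin hK23 h4cyc hs ht (by omega))
  · exact (hS (h.containsSubgraph_sGraph hK23 hs ht
      fun a ha => h.degree_eq_three hmin hmax h4cyc hs ht ha)).elim

end IsBipartiteWith

end SimpleGraph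

theorem core_is_c4_or_c6bar_general {V : Type*} [Fintype V]
    (G : SimpleGraph V) [DecidableRel G.Adj]
    (hconn : G.Connected) (hbip : IsBipartite G)
    (hcard : Fintype.card V ≤ 7)
    (hmin : ∀ v, 2 ≤ G.degree v) (hmax : ∀ v, G.degree v ≤ 3)
    (hK23 : ¬ ContainsSubgraph G k23)
    (hS : ¬ ContainsSubgraph G sGraph)
    (h4cyc : ∀ v, G.degree v = 2 → ∃ c : G.Walk v v, c.IsCycle ∧ c.length = 4) :
    Nonempty (G ≃g cycle4) ∨ Nonempty (G ≃g c6bar) := by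
  classical
  obtain ⟨s, h⟩ := hbip.exists_finset_isBipartiteWith
  obtain ⟨v⟩ := hconn.nonempty
  obtain ⟨w, hvw⟩ := (G.degree_pos_iff_exists_adj v).1 (by have := hmin v; omega)
  obtain ⟨hs, ht⟩ := h.two_le_card hmin hvw
  have hV : #s + #sᶜ = Fintype.card V := card_add_card_compl s
  rcases le_total #s #sᶜ with hle | hle
  · exact h.nonempty_iso_cycle4_or_c6bar hmin hmax hK23 hS h4cyc hs hle hV hcard
  · exact h.symm.nonempty_iso_cycle4_or_c6bar hmin hmax hK23 hS h4cyc ht hle (by omega) hcard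

/-- A finite connected bipartite simple graph on at most 7 vertices, with minimum degree at
least 2 and maximum degree at most 3, containing no `K_{2,3}` and no `S` as a subgraph, and
in which every degree-2 vertex lies on a 4-cycle, is isomorphic to `C4` or to `C̄6`. -/
theorem core_is_c4_or_c6bar {V : Type*} [Fintype V] [DecidableEq V]
    (G : SimpleGraph V) [DecidableRel G.Adj]
    (hconn : G.Connected) (hbip : IsBipartite G)
    (hcard : Fintype.card V ≤ 7)
    (hmin : ∀ v, 2 ≤ G.degree v) (hmax : ∀ v, G.degree v ≤ 3)
    (hK23 : ¬ ContainsSubgraph G k23)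
    (hS : ¬ ContainsSubgraph G sGraph)
    (h4cyc : ∀ v, G.degree v = 2 → ∃ c : G.Walk v v, c.IsCycle ∧ c.length = 4) :
    Nonempty (G ≃g cycle4) ∨ Nonempty (G ≃g c6bar) :=
  core_is_c4_or_c6bar_general G hconn hbip hcard hmin hmax hK23 hS h4cyc
end

section
/- Let π0 = (01234), π1 = (01432), π2 = (04312), π3 = (03421), cyclic permutations of {0,1,2,3,4}. Then: (i) the only antiroute of size 1 from π0 to π1 is {(01)}; (ii) the only antiroute of size 1 from π0 to π2 is {(12)}; (iii) the only antiroute of size 1 from π0 to π3 is {(34)}; (iv) the only antiroute of size 2 from π1 to π2 is {(02),(34)}; (v) there are exactly two antiroutes of size 2 from π2 to π3, namely {(01),(02)} and {(03),(04)}; (vi) there are exactly two antiroutes of size 2 from π1 to π3, namely {(02),(12)} and {(23),(24)}. -/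
/-! Routes of size one or two from a cyclic permutation are sequences of one or two adjacent
transpositions, each step a choice among finitely many pairs of symbols. Every claim thus reduces,
through the list form of a route, to a finite check over those choices, carried out by `decide`. -/

open Equiv

section Routes

variable {α : Type*} [DecidableEq α]

instance RouteList.decidable [Fintype α] :
    ∀ (γ : Perm α) (L : List (Perm α)) (κ : Perm α), Decidable (RouteList γ L κ)
  | γ, [], κ => inferInstanceAs (Decidable (γ = κ))
  | γ, τ :: L, κ =>
    haveI := RouteList.decidable (τ * γ * τ) L κ
    inferInstanceAs (Decidable (∃ x y, x ≠ y ∧ τ = swap x y ∧ (γ x = y ∨ γ y = x) ∧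
      RouteList (τ * γ * τ) L κ))

variable [Fintype α] {γ κ σ τ : Perm α}

theorem isRoute_toFinset_iff {L : List (Perm α)} (hL : L.Nodup) :
    IsRoute γ κ L.toFinset ↔ ∃ L', L'.Perm L ∧ RouteList γ L' κ := by
  constructor
  · rintro ⟨L', hL', hset, hroute⟩
    exact ⟨L', List.perm_of_nodup_nodup_toFinset_eq hL' hL hset, hroute⟩
  · rintro ⟨L', hperm, hroute⟩
    exact ⟨L', hperm.nodup_iff.2 hL, List.toFinset_eq_of_perm _ _ hperm, hroute⟩

theorem isRoute_singleton_iff : IsRoute γ κ {τ} ↔ RouteList γ [τ] κ := by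
  simpa using isRoute_toFinset_iff (γ := γ) (κ := κ) (List.nodup_singleton τ)

theorem isRoute_pair_iff (hne : σ ≠ τ) :
    IsRoute γ κ {σ, τ} ↔ RouteList γ [σ, τ] κ ∨ RouteList γ [τ, σ] κ := by
  have hL : [σ, τ].Nodup := by simpa using hne
  simpa [List.perm_pair] using isRoute_toFinset_iff (γ := γ) (κ := κ) hL

@[elab_as_elim]
theorem IsRoute.of_card_eq_one {p : Finset (Perm α) → Prop} (P : Finset (Perm α))
    (h : IsRoute γ κ P) (hc : P.card = 1)
    (hp : ∀ x y, x ≠ y → (γ x = y ∨ γ y = x) → swap x y * γ * swap x y = κ → p {swap x y}) :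
    p P := by
  obtain ⟨τ, rfl⟩ := Finset.card_eq_one.1 hc
  obtain ⟨x, y, hxy, rfl, hadj, rfl⟩ := isRoute_singleton_iff.1 h
  exact hp x y hxy hadj rfl

@[elab_as_elim]
theorem IsRoute.of_card_eq_two {p : Finset (Perm α) → Prop} (P : Finset (Perm α))
    (h : IsRoute γ κ P) (hc : P.card = 2)
    (hp : ∀ x y u v, x ≠ y → (γ x = y ∨ γ y = x) →
      u ≠ v → ((swap x y * γ * swap x y) u = v ∨ (swap x y * γ * swap x y) v = u) →
      swap u v * (swap x y * γ * swap x y) * swap u v = κ → p {swap x y, swap u v}) :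
    p P := by
  have hlist : ∀ σ τ, RouteList γ [σ, τ] κ → p {σ, τ} := by
    rintro _ _ ⟨x, y, hxy, rfl, hadj, u, v, huv, rfl, hadj', rfl⟩
    exact hp x y u v hxy hadj huv hadj' rfl
  obtain ⟨σ, τ, hne, rfl⟩ := Finset.card_eq_two.1 hc
  rcases (isRoute_pair_iff hne).1 h with h | h
  · exact hlist σ τ h
  · exact Finset.pair_comm τ σ ▸ hlist τ σ h

end Routes

/-- For `π0 = (01234)`, `π1 = (01432)`, `π2 = (04312)`, `π3 = (03421)`:
(i) the only antiroute of size 1 from `π0` to `π1` is `{(01)}`;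
(ii) the only antiroute of size 1 from `π0` to `π2` is `{(12)}`;
(iii) the only antiroute of size 1 from `π0` to `π3` is `{(34)}`;
(iv) the only antiroute of size 2 from `π1` to `π2` is `{(02),(34)}`;
(v) the antiroutes of size 2 from `π2` to `π3` are exactly `{(01),(02)}` and `{(03),(04)}`;
(vi) the antiroutes of size 2 from `π1` to `π3` are exactly `{(02),(12)}` and `{(23),(24)}`. -/
theorem antiroutes_star_configuration
    (π0 π1 π2 π3 : Equiv.Perm (Fin 5))
    (h0 : π0 = cyc5 0 1 2 3 4) (h1 : π1 = cyc5 0 1 4 3 2)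
    (h2 : π2 = cyc5 0 4 3 1 2) (h3 : π3 = cyc5 0 3 4 2 1) :
    (IsAntiroute π0 π1 {Equiv.swap 0 1} ∧
      ∀ P, IsAntiroute π0 π1 P → P.card = 1 → P = {Equiv.swap 0 1}) ∧
    (IsAntiroute π0 π2 {Equiv.swap 1 2} ∧
      ∀ P, IsAntiroute π0 π2 P → P.card = 1 → P = {Equiv.swap 1 2}) ∧
    (IsAntiroute π0 π3 {Equiv.swap 3 4} ∧
      ∀ P, IsAntiroute π0 π3 P → P.card = 1 → P = {Equiv.swap 3 4}) ∧
    (IsAntiroute π1 π2 {Equiv.swap 0 2, Equiv.swap 3 4} ∧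
      ∀ P, IsAntiroute π1 π2 P → P.card = 2 → P = {Equiv.swap 0 2, Equiv.swap 3 4}) ∧
    (IsAntiroute π2 π3 {Equiv.swap 0 1, Equiv.swap 0 2} ∧
      IsAntiroute π2 π3 {Equiv.swap 0 3, Equiv.swap 0 4} ∧
      ∀ P, IsAntiroute π2 π3 P → P.card = 2 →
        (P = {Equiv.swap 0 1, Equiv.swap 0 2} ∨ P = {Equiv.swap 0 3, Equiv.swap 0 4})) ∧
    (IsAntiroute π1 π3 {Equiv.swap 0 2, Equiv.swap 1 2} ∧
      IsAntiroute π1 π3 {Equiv.swap 2 3, Equiv.swap 2 4} ∧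
      ∀ P, IsAntiroute π1 π3 P → P.card = 2 →
        (P = {Equiv.swap 0 2, Equiv.swap 1 2} ∨ P = {Equiv.swap 2 3, Equiv.swap 2 4})) := by
  subst h0 h1 h2 h3
  refine ⟨⟨?_, ?_⟩, ⟨?_, ?_⟩, ⟨?_, ?_⟩, ⟨?_, ?_⟩, ⟨?_, ?_, ?_⟩, ⟨?_, ?_, ?_⟩⟩
  · exact isRoute_singleton_iff.2 (by decide)
  · exact fun P hP hc => IsRoute.of_card_eq_one P hP hc (by decide)
  · exact isRoute_singleton_iff.2 (by decide)
  · exact fun P hP hc => IsRoute.of_card_eq_one P hP hc (by decide)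
  · exact isRoute_singleton_iff.2 (by decide)
  · exact fun P hP hc => IsRoute.of_card_eq_one P hP hc (by decide)
  · exact (isRoute_pair_iff (by decide)).2 (by decide)
  · exact fun P hP hc => IsRoute.of_card_eq_two P hP hc (by decide)
  · exact (isRoute_pair_iff (by decide)).2 (by decide)
  · exact (isRoute_pair_iff (by decide)).2 (by decide)
  · exact fun P hP hc => IsRoute.of_card_eq_two P hP hc (by decide)
  · exact (isRoute_pair_iff (by decide)).2 (by decide)
  · exact (isRoute_pair_iff (by decide)).2 (by decide)
  · exact fun P hP hc => IsRoute.of_card_eq_two P hP hc (by decide)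
end
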